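/- Sequential composition correctness: given path-sums ξ with associated operator U_ξ : |x⟩ ↦ (1/√(2^m)) ∑_{y∈Z_2^m} e^{2πiP(x,y)}|f(x,y)⟩ and ξ' with U_{ξ'} : |x'⟩ ↦ (1/√(2^{m'})) ∑_{y'∈Z_2^{m'}} e^{2πiP'(x',y')}|f'(x',y')⟩, the path-sum with m+m' path variables, phase P(x,y) + P'(f(x,y), y') and output f'(f(x,y), y'), obtained by substituting f_i(x,y) for x'_i (using the lifting into D for phase substitutions), has associated operator equal to the composite U_{ξ'} ∘ U_ξ. -/
import Mathlib


open scoped BigOperators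

/-- The computational basis state `|z⟩` in the `2^n`-dimensional Hilbert space. -/
noncomputable def ket {n : ℕ} (z : Fin n → ZMod 2) : (Fin n → ZMod 2) → ℂ :=
  fun w => if w = z then 1 else 0

/-- The phase `e^{2πi t}` for a (dyadic) rational `t`. -/
noncomputable def ph (t : ℚ) : ℂ := Complex.exp (2 * (Real.pi : ℂ) * Complex.I * (t : ℂ))

/-- The matrix (in the computational basis) of the path-sum with phase `P` and output
`f`: the `(z, x)` entry is `⟨z| U |x⟩ = (1/√(2^m)) ∑_y e^{2πiP(x,y)} [z = f(x,y)]`. -/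
noncomputable def pathSumMatrix (n m : ℕ)
    (P : (Fin n → ZMod 2) → (Fin m → ZMod 2) → ℚ)
    (f : (Fin n → ZMod 2) → (Fin m → ZMod 2) → (Fin n → ZMod 2)) :
    Matrix (Fin n → ZMod 2) (Fin n → ZMod 2) ℂ :=
  Matrix.of fun z x =>
    (((Real.sqrt (2 ^ m))⁻¹ : ℝ) : ℂ) *
      ∑ y : Fin m → ZMod 2, ph (P x y) * (if z = f x y then 1 else 0)

lemma ph_add (s t : ℚ) : ph (s + t) = ph s * ph t := by
  unfold ph
  rw [← Complex.exp_add]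
  push_cast
  ring_nf

/-- sequential composition correctness.  The path-sum with `m + m'` path
variables, phase `P(x,y) + P'(f(x,y), y')` and output `f'(f(x,y), y')` (obtained by
substituting the outputs of `ξ` into the inputs of `ξ'`) has associated operator equal
to the composite `U_{ξ'} ∘ U_ξ`. -/
theorem stmt11 (n m m' : ℕ)
    (P : (Fin n → ZMod 2) → (Fin m → ZMod 2) → ℚ)
    (f : (Fin n → ZMod 2) → (Fin m → ZMod 2) → (Fin n → ZMod 2))
    (P' : (Fin n → ZMod 2) → (Fin m' → ZMod 2) → ℚ)
    (f' : (Fin n → ZMod 2) → (Fin m' → ZMod 2) → (Fin n → ZMod 2)) :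
    pathSumMatrix n m' P' f' * pathSumMatrix n m P f
      = Matrix.of fun z x =>
          (((Real.sqrt (2 ^ (m + m')))⁻¹ : ℝ) : ℂ) *
            ∑ y : Fin m → ZMod 2, ∑ y' : Fin m' → ZMod 2,
              ph (P x y + P' (f x y) y') * (if z = f' (f x y) y' then 1 else 0) := by
  ext z x
  simp only [Matrix.mul_apply, pathSumMatrix, Matrix.of_apply]
  have hsqrt : (((Real.sqrt (2 ^ (m + m')))⁻¹ : ℝ) : ℂ)
      = (((Real.sqrt (2 ^ m'))⁻¹ : ℝ) : ℂ) * (((Real.sqrt (2 ^ m))⁻¹ : ℝ) : ℂ) := by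
    rw [← Complex.ofReal_mul, ← mul_inv, ← Real.sqrt_mul (by positivity), ← pow_add,
      add_comm m' m]
  rw [hsqrt]
  simp only [ph_add, Finset.mul_sum, Finset.sum_mul, mul_ite, mul_one, mul_zero,
    ite_mul, zero_mul]
  rw [Finset.sum_comm]
  refine Finset.sum_congr rfl fun y _ => ?_
  rw [Finset.sum_ite_eq' Finset.univ (f x y)]
  simp only [Finset.mem_univ, if_true]
  refine Finset.sum_congr rfl fun y' _ => ?_
  by_cases h : z = f' (f x y) y' <;> simp [h] <;> ring
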